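/- Let β = (β_0, 2, 2, 2, ...) be a mixed base with β_1 = β_2 = ... = 2. Then the set 𝒞 = {C ∈ ℕ^m : wt(C) = 1} ∪ {C ∈ ℕ^m : 1 ≤ Σ_i c^i ≤ β_0 - 1} is contained in every Sprague-Grundy system of σ_{β,m}; i.e., 𝒞 is the minimum Sprague-Grundy system of σ_β. -/

import Mathlib

open scoped BigOperators

/-- β̂_L = β_0 ⋯ β_{L-1}, the place value of digit L in mixed base β. -/
def bhat (β : ℕ → ℕ) (L : ℕ) : ℕ := ∏ i ∈ Finset.range L, β i

/-- The L-th digit of n in the mixed base β. -/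
def mdigit (β : ℕ → ℕ) (n L : ℕ) : ℕ := n / bhat β L % β L

/-- Digit-wise addition modulo β_L in mixed base β. -/
def moplus (β : ℕ → ℕ) (n h : ℕ) : ℕ :=
  ∑ L ∈ Finset.range (n + h + 1), ((mdigit β n L + mdigit β h L) % β L) * bhat β L

/-- Digit-wise subtraction modulo β_L in mixed base β. -/
def mominus (β : ℕ → ℕ) (n h : ℕ) : ℕ :=
  ∑ L ∈ Finset.range (n + h + 1), ((β L + mdigit β n L - mdigit β h L) % β L) * bhat β L

/-- σ_β(X) = x^0 ⊕ ⋯ ⊕ x^{m-1}: the digit-wise Nim sum in mixed base β. -/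
def msigma (β : ℕ → ℕ) {m : ℕ} (X : Fin m → ℕ) : ℕ :=
  ∑ L ∈ Finset.range (∑ i, X i + 1), ((∑ i, mdigit β (X i) L) % β L) * bhat β L

/-- Hamming weight: number of nonzero components. -/
def hamwt {m : ℕ} (C : Fin m → ℕ) : ℕ := (Finset.univ.filter (fun i => C i ≠ 0)).card

/-- ord_β(n): the largest L with β̂_L ∣ n (⊤ for n = 0). -/
def mord (β : ℕ → ℕ) (n : ℕ) : ℕ∞ :=
  if n = 0 then ⊤ else (Nat.findGreatest (fun L => bhat β L ∣ n) n : ℕ∞)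

/-- 𝒞 is a Sprague-Grundy system of σ_β: its members are nonzero moves and
σ_β satisfies the mex recursion of the take-away game Γ(ℕ^m, 𝒞), i.e. σ_β is the
Sprague-Grundy function of that game. -/
def IsSGSystem (β : ℕ → ℕ) {m : ℕ} (𝒞 : Set (Fin m → ℕ)) : Prop :=
  (∀ C ∈ 𝒞, C ≠ 0) ∧
  ∀ X : Fin m → ℕ, msigma β X =
    sInf {n : ℕ | ∀ C ∈ 𝒞, (∀ i, C i ≤ X i) → msigma β (fun i => X i - C i) ≠ n}

/-! A position `C` with `σ_β(C) ≠ 0` has, in every Sprague-Grundy system `𝒟`, a move to a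
position of value `0`. When `C` has weight one or total size `< β₀`, the value `σ_β(Y)` of any
`Y ≤ C` is its single nonzero coordinate, resp. its total size, so the only such position is `0`:
the move is `C` itself, and `C ∈ 𝒟`. -/

section MixedBase

variable {β : ℕ → ℕ}

lemma bhat_succ (β : ℕ → ℕ) (L : ℕ) : bhat β (L + 1) = bhat β L * β L := by
  simp [bhat, Finset.prod_range_succ]

lemma two_pow_le_bhat (hβ : ∀ L, 2 ≤ β L) (k : ℕ) : 2 ^ k ≤ bhat β k := by
  induction k with
  | zero => simp [bhat]
  | succ k ih => rw [bhat_succ, pow_succ]; exact Nat.mul_le_mul ih (hβ k)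

lemma lt_bhat_self (hβ : ∀ L, 2 ≤ β L) (n : ℕ) : n < bhat β n :=
  Nat.lt_two_pow_self.trans_le (two_pow_le_bhat hβ n)

lemma beta_zero_le_bhat (hβ : ∀ L, 2 ≤ β L) {L : ℕ} (hL : L ≠ 0) : β 0 ≤ bhat β L :=
  Finset.single_le_prod' (fun i _ => (hβ i).trans' one_le_two)
    (Finset.mem_range.2 (Nat.pos_of_ne_zero hL))

lemma mdigit_zero_left (β : ℕ → ℕ) (L : ℕ) : mdigit β 0 L = 0 := by simp [mdigit]

lemma mdigit_zero_right (β : ℕ → ℕ) (n : ℕ) : mdigit β n 0 = n % β 0 := by simp [mdigit, bhat]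

lemma mdigit_eq_zero_of_lt_bhat {n L : ℕ} (h : n < bhat β L) : mdigit β n L = 0 := by
  simp [mdigit, Nat.div_eq_of_lt h]

lemma sum_mdigit_mul_bhat (β : ℕ → ℕ) (n k : ℕ) :
    ∑ L ∈ Finset.range k, mdigit β n L * bhat β L = n % bhat β k := by
  induction k with
  | zero => simp [bhat, Nat.mod_one]
  | succ k ih =>
    rw [Finset.sum_range_succ, ih, bhat_succ, Nat.mod_mul, mdigit]
    ring

lemma sum_range_succ_mdigit_mul_bhat (hβ : ∀ L, 2 ≤ β L) (n : ℕ) :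
    ∑ L ∈ Finset.range (n + 1), mdigit β n L * bhat β L = n := by
  rw [sum_mdigit_mul_bhat, Nat.mod_eq_of_lt ((Nat.lt_succ_self n).trans (lt_bhat_self hβ _))]

lemma msigma_eq_of_forall_ne_eq_zero (hβ : ∀ L, 2 ≤ β L) {m : ℕ} {X : Fin m → ℕ} {j : Fin m}
    (hX : ∀ i ≠ j, X i = 0) : msigma β X = X j := by
  have hsum : ∑ i, X i = X j :=
    Finset.sum_eq_single j (fun i _ hi => hX i hi) (by simp)
  have hdigit (L : ℕ) : (∑ i, mdigit β (X i) L) % β L = mdigit β (X j) L := by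
    rw [Finset.sum_eq_single j (fun i _ hi => by rw [hX i hi, mdigit_zero_left]) (by simp),
      mdigit, Nat.mod_mod]
  simp only [msigma, hsum, hdigit]
  exact sum_range_succ_mdigit_mul_bhat hβ (X j)

lemma msigma_eq_sum_of_sum_lt (hβ : ∀ L, 2 ≤ β L) {m : ℕ} {X : Fin m → ℕ}
    (hs : ∑ i, X i < β 0) : msigma β X = ∑ i, X i := by
  have hX (i : Fin m) : X i < β 0 :=
    (Finset.single_le_sum (fun _ _ => Nat.zero_le _) (Finset.mem_univ i)).trans_lt hs
  unfold msigma
  rw [Finset.sum_eq_single_of_mem 0 (Finset.mem_range.2 (Nat.succ_pos _))]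
  · simp [mdigit_zero_right, Nat.mod_eq_of_lt (hX _), Nat.mod_eq_of_lt hs, bhat]
  · intro L _ hL
    simp [mdigit_eq_zero_of_lt_bhat ((hX _).trans_le (beta_zero_le_bhat hβ hL))]

end MixedBase

lemma exists_ne_zero_forall_ne_eq_zero_of_hamwt_eq_one {m : ℕ} {C : Fin m → ℕ}
    (h : hamwt C = 1) : ∃ j, C j ≠ 0 ∧ ∀ i ≠ j, C i = 0 := by
  obtain ⟨j, hj⟩ := Finset.card_eq_one.mp h
  have hmem (i : Fin m) : C i ≠ 0 ↔ i = j := by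
    simpa using congrArg (i ∈ ·) hj
  exact ⟨j, (hmem j).2 rfl, fun i hi => not_not.1 (mt (hmem i).1 hi)⟩

namespace IsSGSystem

variable {β : ℕ → ℕ} {m : ℕ} {𝒟 : Set (Fin m → ℕ)}

lemma exists_move_to_msigma_eq_zero (h𝒟 : IsSGSystem β 𝒟) {X : Fin m → ℕ}
    (hX : msigma β X ≠ 0) : ∃ D ∈ 𝒟, D ≤ X ∧ msigma β (X - D) = 0 := by
  by_contra! h
  have h0 : 0 ∈ {n : ℕ | ∀ D ∈ 𝒟, (∀ i, D i ≤ X i) →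
      msigma β (fun i => X i - D i) ≠ n} := fun D hD hle => h D hD hle
  exact hX (Nat.le_zero.1 (h𝒟.2 X ▸ Nat.sInf_le h0))

lemma mem_of_forall_le_msigma_eq_zero (h𝒟 : IsSGSystem β 𝒟) {X : Fin m → ℕ}
    (hX : msigma β X ≠ 0) (hzero : ∀ Y ≤ X, msigma β Y = 0 → Y = 0) : X ∈ 𝒟 := by
  obtain ⟨D, hD, hDX, hXD⟩ := h𝒟.exists_move_to_msigma_eq_zero hX
  have hXD : X - D = 0 := hzero _ tsub_le_self hXD
  rwa [le_antisymm hDX (tsub_eq_zero_iff_le.1 hXD)] at hD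

lemma mem_of_hamwt_eq_one (hβ : ∀ L, 2 ≤ β L) (h𝒟 : IsSGSystem β 𝒟) {C : Fin m → ℕ}
    (hC : hamwt C = 1) : C ∈ 𝒟 := by
  obtain ⟨j, hCj, hC⟩ := exists_ne_zero_forall_ne_eq_zero_of_hamwt_eq_one hC
  refine h𝒟.mem_of_forall_le_msigma_eq_zero ?_ fun Y hYC hY => ?_
  · rwa [msigma_eq_of_forall_ne_eq_zero hβ hC]
  · have hYi : ∀ i ≠ j, Y i = 0 := fun i hi => Nat.le_zero.1 (hC i hi ▸ hYC i)
    rw [msigma_eq_of_forall_ne_eq_zero hβ hYi] at hY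
    funext i
    by_cases hi : i = j
    · exact hi ▸ hY
    · exact hYi i hi

lemma mem_of_sum_lt (hβ : ∀ L, 2 ≤ β L) (h𝒟 : IsSGSystem β 𝒟) {C : Fin m → ℕ}
    (hC0 : 1 ≤ ∑ i, C i) (hC : ∑ i, C i < β 0) : C ∈ 𝒟 := by
  refine h𝒟.mem_of_forall_le_msigma_eq_zero ?_ fun Y hYC hY => ?_
  · rw [msigma_eq_sum_of_sum_lt hβ hC]
    omega
  · have hYsum : ∑ i, Y i ≤ ∑ i, C i := Finset.sum_le_sum fun i _ => hYC i
    rw [msigma_eq_sum_of_sum_lt hβ (hYsum.trans_lt hC)] at hY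
    funext i
    exact Finset.sum_eq_zero_iff.1 hY i (Finset.mem_univ i)

end IsSGSystem

/-- For β = (β₀, 2, 2, …), the set of weight-one moves together with moves of
total size < β₀ is contained in every Sprague-Grundy system of σ_β. -/
theorem stmt7 (β : ℕ → ℕ) (hβ0 : 2 ≤ β 0) (hβ : ∀ L, 1 ≤ L → β L = 2)
    {m : ℕ} (𝒟 : Set (Fin m → ℕ)) (h𝒟 : IsSGSystem β 𝒟) :
    ({C : Fin m → ℕ | hamwt C = 1} ∪
      {C : Fin m → ℕ | 1 ≤ ∑ i, C i ∧ ∑ i, C i ≤ β 0 - 1}) ⊆ 𝒟 := by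
  have h2 : ∀ L, 2 ≤ β L := fun L => by
    rcases Nat.eq_zero_or_pos L with rfl | hL
    · exact hβ0
    · exact (hβ L hL).ge
  rintro C (hC | ⟨hC0, hC⟩)
  · exact IsSGSystem.mem_of_hamwt_eq_one h2 h𝒟 hC
  · exact IsSGSystem.mem_of_sum_lt h2 h𝒟 hC0 (by omega)
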